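/- arXiv:2301.08335 — 3 statements merged into one kernel-verified Lean document; each statement's English description precedes it below -/
import Mathlib

section
/- Let (E, (ℓ_k)_{k≥1}, ρ) be a negatively graded Lie ∞-algebroid over a commutative algebra O with no zero divisors acting on E_{−1}. Then the axioms ρ∘ℓ₁ = 0 on E_{−2} and ρ(ℓ₂(x,y)) = [ρ(x),ρ(y)] for x,y ∈ E_{−1} follow automatically from the higher Jacobi identities together with the Leibniz rule for ℓ₂ and O-multilinearity of ℓ_k for k ≠ 2. -/
/-!
Both axioms are read off from the failure of `O`-linearity of a Jacobi identity in one argument.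
For `u ∈ E₋₂` and `v ∈ E₋₁` the binary Jacobi identity `ℓ₂(ℓ₁u, v) + ℓ₁ℓ₂(u, v) = 0` holds for
`v` and for `f v`; since `ρ u = 0` and `ℓ₁` is `O`-linear, the only term that is not `O`-linear in
`v` is `ρ(ℓ₁u)[f] v`, which therefore vanishes. Likewise, replacing `z` by `f z` in the ternary
Jacobi identity on `E₋₁` leaves `(ρ(ℓ₂(x,y))[f] - [ρx, ρy][f]) z = 0`, the remaining anchor terms
cancelling by antisymmetry of `ℓ₂`. Taking `v = ℓ₁u` and `z = x`, absence of zero divisors on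
`E₋₁` gives the two axioms (when that element is `0`, they hold trivially).
-/

open Finset

/-- The Koszul sign `ε(σ; x₁,…,xₙ)` determined by degrees `d j` of the (graded symmetric)
arguments: a product of `(-1)^{d_a d_b}` over the inversions of `σ`. -/
def koszulSign {n : ℕ} (d : Fin n → ℕ) (σ : Equiv.Perm (Fin n)) : ℤ :=
  ∏ p ∈ Finset.univ.filter (fun p : Fin n × Fin n => p.1 < p.2 ∧ σ p.2 < σ p.1),
    (-1 : ℤ) ^ (d (σ p.1) * d (σ p.2))

/-- `σ` is an `(i, n-i)`-shuffle: it is increasing on the first `i` and on the last `n - i`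
positions. -/
def IsShuffle {n : ℕ} (i : ℕ) (σ : Equiv.Perm (Fin n)) : Prop :=
  (∀ a b : Fin n, a < b → (b : ℕ) < i → σ a < σ b) ∧
  (∀ a b : Fin n, a < b → i ≤ (a : ℕ) → σ a < σ b)

open Classical in
/-- The finite set of `(i, n-i)`-shuffles. -/
noncomputable def shuffles (n i : ℕ) : Finset (Equiv.Perm (Fin n)) :=
  Finset.univ.filter (fun σ => IsShuffle i σ)

/-- The left-hand side of the `n`-th higher Jacobi identity for a family of graded symmetric
multibrackets `l`, evaluated on arguments `x` with `x j` of degree `-(g j + 1)`: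
`∑_{i=1}^{n} ∑_{σ ∈ Sh(i,n-i)} ε(σ) ℓ_{n-i+1}(ℓ_i(x_{σ(1)},…,x_{σ(i)}), x_{σ(i+1)},…,x_{σ(n)})`. -/
noncomputable def jacobiator {K M : Type*} [Field K] [AddCommGroup M] [Module K M]
    (l : (k : ℕ) → MultilinearMap K (fun _ : Fin k => M) M)
    (n : ℕ) (g : Fin n → ℕ) (x : Fin n → M) : M :=
  ∑ i : Fin n, ∑ σ ∈ shuffles n (i.1 + 1),
    koszulSign (fun j => g j + 1) σ •
      l (n - (i.1 + 1) + 1)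
        (Fin.cons
          (l (i.1 + 1) (fun j : Fin (i.1 + 1) => x (σ (Fin.castLE i.isLt j))))
          (fun j : Fin (n - (i.1 + 1)) => x (σ ⟨i.1 + 1 + j.1, by have := j.isLt; omega⟩)))

/-- A negatively graded Lie ∞-algebroid over `O`: a negatively graded `O`-module with graded
symmetric `K`-multilinear brackets `ℓ_k` of degree `+1` satisfying the higher Jacobi identities,
an `O`-linear anchor `ρ : E_{-1} → Der(O)` (extended by zero in lower degrees),
`O`-multilinearity of `ℓ_k` for `k ≠ 2`, and the Leibniz rule for `ℓ₂`.  (The axioms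
`ρ ∘ ℓ₁ = 0` on `E_{-2}` and `ρ(ℓ₂(x,y)) = [ρ x, ρ y]` are *not* assumed.) -/
structure LieInftyAlgebroid (K O M : Type*) [Field K] [CharZero K] [CommRing O] [Algebra K O]
    [AddCommGroup M] [Module K M] [Module O M] [IsScalarTower K O M] where
  /-- `grade n` is the component `E_{-(n+1)}` of degree `-(n+1)`. -/
  grade : ℕ → Submodule O M
  internal : DirectSum.IsInternal grade
  /-- The `k`-ary brackets. -/
  l : (k : ℕ) → MultilinearMap K (fun _ : Fin k => M) M
  /-- The anchor map. -/
  anchor : M →ₗ[O] Derivation K O O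
  anchor_top : ∀ n, ∀ x ∈ grade (n + 1), anchor x = 0
  /-- Each `ℓ_k` has degree `+1`. -/
  l_deg : ∀ (k t : ℕ) (g : Fin k → ℕ) (x : Fin k → M), (∀ j, x j ∈ grade (g j)) →
      (∑ j, (g j + 1)) = t + 2 → l k x ∈ grade t
  l_bottom : ∀ x ∈ grade 0, l 1 ![x] = 0
  /-- The brackets are graded symmetric. -/
  l_symm : ∀ (k : ℕ) (g : Fin k → ℕ) (x : Fin k → M), (∀ j, x j ∈ grade (g j)) →
      ∀ σ : Equiv.Perm (Fin k),
        l k (fun j => x (σ j)) = koszulSign (fun j => g j + 1) σ • l k x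
  /-- For `k ≠ 2`, `ℓ_k` is `O`-multilinear. -/
  l_olin : ∀ (k : ℕ), k ≠ 2 → ∀ (x : Fin k → M) (j : Fin k) (f : O) (v : M),
      l k (Function.update x j (f • v)) = f • l k (Function.update x j v)
  /-- The Leibniz rule `ℓ₂(x, f y) = ρ(x)[f] y + f ℓ₂(x, y)`. -/
  leibniz : ∀ (x y : M) (f : O), l 2 ![x, f • y] = anchor x f • y + f • l 2 ![x, y]
  /-- The higher Jacobi identities. -/
  jacobi : ∀ (n : ℕ) (g : Fin n → ℕ) (x : Fin n → M), (∀ j, x j ∈ grade (g j)) →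
      jacobiator l n g x = 0

instance {n i : ℕ} : DecidablePred (IsShuffle (n := n) i) := fun _ => by
  unfold IsShuffle; infer_instance

/- `shuffles` is defined with classical decidability; restating it with the computable instance
lets `decide` enumerate the shuffles below. -/
lemma shuffles_eq_filter (n i : ℕ) :
    shuffles n i = Finset.univ.filter (fun σ => IsShuffle i σ) := by
  unfold shuffles; exact Finset.filter_congr_decidable _ _ _

lemma shuffles_two_one : shuffles 2 1 = {1, Equiv.swap 0 1} := by
  rw [shuffles_eq_filter]; decide

lemma shuffles_two_two : shuffles 2 2 = {1} := by
  rw [shuffles_eq_filter]; decide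

lemma shuffles_three_two : shuffles 3 2 = {1, Equiv.swap 1 2, finRotate 3} := by
  rw [shuffles_eq_filter]; decide

lemma shuffles_three_three : shuffles 3 3 = {1} := by
  rw [shuffles_eq_filter]; decide

section Jacobiator

variable {K M : Type*} [Field K] [AddCommGroup M] [Module K M]
  (l : (k : ℕ) → MultilinearMap K (fun _ : Fin k => M) M)

lemma jacobiator_two (g : Fin 2 → ℕ) (x : Fin 2 → M) :
    jacobiator l 2 g x =
      (koszulSign (fun j => g j + 1) 1 • l 2 ![l 1 ![x 0], x 1]
        + koszulSign (fun j => g j + 1) (Equiv.swap 0 1) • l 2 ![l 1 ![x 1], x 0])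
      + koszulSign (fun j => g j + 1) 1 • l 1 ![l 2 ![x 0, x 1]] := by
  rw [jacobiator, Fin.sum_univ_two]
  simp only [Fin.val_zero, Fin.val_one, zero_add, Nat.reduceAdd, shuffles_two_one,
    shuffles_two_two]
  rw [Finset.sum_insert (by decide), Finset.sum_singleton, Finset.sum_singleton]
  congr
  all_goals (ext j; fin_cases j <;> rfl)

lemma jacobiator_three (g : Fin 3 → ℕ) (x : Fin 3 → M) :
    jacobiator l 3 g x =
      (∑ σ ∈ shuffles 3 1,
          koszulSign (fun j => g j + 1) σ • l 3 ![l 1 ![x (σ 0)], x (σ 1), x (σ 2)]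
        + (koszulSign (fun j => g j + 1) 1 • l 2 ![l 2 ![x 0, x 1], x 2]
          + (koszulSign (fun j => g j + 1) (Equiv.swap 1 2) • l 2 ![l 2 ![x 0, x 2], x 1]
            + koszulSign (fun j => g j + 1) (finRotate 3) • l 2 ![l 2 ![x 1, x 2], x 0])))
      + koszulSign (fun j => g j + 1) 1 • l 1 ![l 3 ![x 0, x 1, x 2]] := by
  rw [jacobiator, Fin.sum_univ_three]
  simp only [Fin.val_zero, Fin.val_one, Fin.val_two, zero_add, Nat.reduceAdd,
    shuffles_three_two, shuffles_three_three]
  rw [Finset.sum_insert (by decide), Finset.sum_insert (by decide), Finset.sum_singleton,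
    Finset.sum_singleton]
  congr
  · ext σ
    congr
    all_goals (ext j; fin_cases j <;> rfl)
  all_goals (ext j; fin_cases j <;> rfl)

end Jacobiator

namespace LieInftyAlgebroid

variable {K O M : Type*} [Field K] [CharZero K] [CommRing O] [Algebra K O]
  [AddCommGroup M] [Module K M] [Module O M] [IsScalarTower K O M]
  (E : LieInftyAlgebroid K O M)

lemma l_one_smul (f : O) (q : M) : E.l 1 ![f • q] = f • E.l 1 ![q] := by
  have hupd (v : M) : Function.update ![q] 0 v = ![v] := by funext j; fin_cases j; rfl
  rw [← hupd, E.l_olin 1 (by decide), hupd]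

lemma l_three_smul_right (f : O) (a b c : M) :
    E.l 3 ![a, b, f • c] = f • E.l 3 ![a, b, c] := by
  have hupd (v : M) : Function.update ![a, b, c] 2 v = ![a, b, v] := by
    funext j; fin_cases j <;> rfl
  rw [← hupd, E.l_olin 3 (by decide), hupd]

lemma l_two_zero_left (y : M) : E.l 2 ![0, y] = 0 :=
  (E.l 2).map_coord_zero 0 rfl

lemma l_two_add_left (a b c : M) : E.l 2 ![a + b, c] = E.l 2 ![a, c] + E.l 2 ![b, c] :=
  (E.l 2).cons_add ![c] a b

lemma l_one_mem_grade_zero {u : M} (hu : u ∈ E.grade 1) : E.l 1 ![u] ∈ E.grade 0 :=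
  E.l_deg 1 0 ![1] ![u] (by intro j; fin_cases j; simpa) (by decide)

lemma l_two_mem_grade_zero {a b : M} (ha : a ∈ E.grade 0) (hb : b ∈ E.grade 0) :
    E.l 2 ![a, b] ∈ E.grade 0 :=
  E.l_deg 2 0 ![0, 0] ![a, b] (by intro j; fin_cases j <;> simpa) (by decide)

lemma l_two_antisymm {a b : M} (ha : a ∈ E.grade 0) (hb : b ∈ E.grade 0) :
    E.l 2 ![a, b] = -E.l 2 ![b, a] := by
  have h := E.l_symm 2 ![0, 0] ![b, a] (by intro j; fin_cases j <;> simpa) (Equiv.swap 0 1)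
  have hswap : (fun j => ![b, a] (Equiv.swap 0 1 j)) = ![a, b] := by
    funext j; fin_cases j <;> rfl
  have hsign : koszulSign (fun j => (![0, 0] : Fin 2 → ℕ) j + 1) (Equiv.swap 0 1) = -1 := by
    decide
  rw [hswap, hsign, neg_one_zsmul] at h
  exact h

lemma l_two_smul_left {a b : M} (ha : a ∈ E.grade 0) (hb : b ∈ E.grade 0) (f : O) :
    E.l 2 ![f • a, b] = -(E.anchor b f • a) + f • E.l 2 ![a, b] := by
  rw [E.l_two_antisymm (Submodule.smul_mem _ f ha) hb, E.leibniz, E.l_two_antisymm hb ha]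
  module

lemma l_two_l_two_smul {a b z : M} (ha : a ∈ E.grade 0) (hb : b ∈ E.grade 0)
    (hz : z ∈ E.grade 0) (f : O) :
    E.l 2 ![E.l 2 ![a, f • z], b] =
      -(E.anchor b (E.anchor a f) • z) - E.anchor a f • E.l 2 ![b, z]
        - E.anchor b f • E.l 2 ![a, z] + f • E.l 2 ![E.l 2 ![a, z], b] := by
  rw [E.leibniz, E.l_two_add_left, E.l_two_smul_left hz hb,
    E.l_two_smul_left (E.l_two_mem_grade_zero ha hz) hb, E.l_two_antisymm hz hb]
  module

lemma jacobi_two {u v : M} (hu : u ∈ E.grade 1) (hv : v ∈ E.grade 0) :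
    E.l 2 ![E.l 1 ![u], v] + E.l 1 ![E.l 2 ![u, v]] = 0 := by
  have h := E.jacobi 2 ![1, 0] ![u, v] (by intro j; fin_cases j <;> simpa)
  have hsign_one : koszulSign (fun j => (![1, 0] : Fin 2 → ℕ) j + 1) 1 = 1 := by decide
  have hsign_swap :
      koszulSign (fun j => (![1, 0] : Fin 2 → ℕ) j + 1) (Equiv.swap 0 1) = 1 := by decide
  rw [jacobiator_two, hsign_one, hsign_swap] at h
  simpa only [Matrix.cons_val_zero, Matrix.cons_val_one, one_smul, E.l_bottom v hv,
    E.l_two_zero_left, add_zero] using h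

lemma jacobi_three {x y z : M} (hx : x ∈ E.grade 0) (hy : y ∈ E.grade 0) (hz : z ∈ E.grade 0) :
    E.l 2 ![E.l 2 ![x, y], z] - E.l 2 ![E.l 2 ![x, z], y] + E.l 2 ![E.l 2 ![y, z], x]
      + E.l 1 ![E.l 3 ![x, y, z]] = 0 := by
  have hmem : ∀ j, ![x, y, z] j ∈ E.grade 0 := by intro j; fin_cases j <;> simpa
  have h := E.jacobi 3 ![0, 0, 0] ![x, y, z] (by intro j; fin_cases j <;> simpa)
  have hbottom : ∑ σ ∈ shuffles 3 1, koszulSign (fun j => (![0, 0, 0] : Fin 3 → ℕ) j + 1) σ •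
      E.l 3 ![E.l 1 ![![x, y, z] (σ 0)], ![x, y, z] (σ 1), ![x, y, z] (σ 2)] = 0 :=
    Finset.sum_eq_zero fun σ _ => by
      rw [E.l_bottom _ (hmem (σ 0)), (E.l 3).map_coord_zero 0 rfl, smul_zero]
  have hsign_one : koszulSign (fun j => (![0, 0, 0] : Fin 3 → ℕ) j + 1) 1 = 1 := by decide
  have hsign_swap :
      koszulSign (fun j => (![0, 0, 0] : Fin 3 → ℕ) j + 1) (Equiv.swap 1 2) = -1 := by decide
  have hsign_rotate :
      koszulSign (fun j => (![0, 0, 0] : Fin 3 → ℕ) j + 1) (finRotate 3) = 1 := by decide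
  rw [jacobiator_three, hbottom, hsign_one, hsign_swap, hsign_rotate] at h
  simp only [Matrix.cons_val_zero, Matrix.cons_val_one, Matrix.cons_val_two, one_smul,
    neg_one_zsmul, zero_add] at h
  rw [← h]
  abel

lemma anchor_l_one_apply_smul_eq_zero {u v : M} (hu : u ∈ E.grade 1) (hv : v ∈ E.grade 0)
    (f : O) : E.anchor (E.l 1 ![u]) f • v = 0 := by
  have hfv := E.jacobi_two hu (Submodule.smul_mem _ f hv)
  rw [E.leibniz, E.leibniz u, E.anchor_top 0 u hu, Derivation.zero_apply, zero_smul, zero_add,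
    E.l_one_smul] at hfv
  linear_combination (norm := module) hfv - f • E.jacobi_two hu hv

lemma anchor_l_two_sub_lie_apply_smul_eq_zero {x y z : M} (hx : x ∈ E.grade 0)
    (hy : y ∈ E.grade 0) (hz : z ∈ E.grade 0) (f : O) :
    (E.anchor (E.l 2 ![x, y]) f - ⁅E.anchor x, E.anchor y⁆ f) • z = 0 := by
  have hfz := E.jacobi_three hx hy (Submodule.smul_mem _ f hz)
  rw [E.leibniz (E.l 2 ![x, y]), E.l_two_l_two_smul hx hy hz, E.l_two_l_two_smul hy hx hz,
    E.l_three_smul_right, E.l_one_smul] at hfz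
  rw [Derivation.commutator_apply]
  linear_combination (norm := module) hfz - f • E.jacobi_three hx hy hz

end LieInftyAlgebroid

/-- If `O` has no zero divisors on `E_{-1}`, then `ρ ∘ ℓ₁ = 0` on `E_{-2}` and
`ρ(ℓ₂(x,y)) = [ρ(x), ρ(y)]` for `x, y ∈ E_{-1}` follow automatically. -/
theorem anchor_axioms_automatic
    {K O M : Type*} [Field K] [CharZero K] [CommRing O] [Algebra K O]
    [AddCommGroup M] [Module K M] [Module O M] [IsScalarTower K O M]
    (E : LieInftyAlgebroid K O M)
    (hnzd : ∀ (f : O) (e : M), e ∈ E.grade 0 → f • e = 0 → f = 0 ∨ e = 0) :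
    (∀ x ∈ E.grade 1, E.anchor (E.l 1 ![x]) = 0) ∧
    (∀ x ∈ E.grade 0, ∀ y ∈ E.grade 0,
      E.anchor (E.l 2 ![x, y]) = ⁅E.anchor x, E.anchor y⁆) := by
  refine ⟨fun u hu => ?_, fun x hx y hy => ?_⟩
  · have hw := E.l_one_mem_grade_zero hu
    by_cases hw0 : E.l 1 ![u] = 0
    · rw [hw0, map_zero]
    ext f
    exact (hnzd _ _ hw (E.anchor_l_one_apply_smul_eq_zero hu hw f)).resolve_right hw0
  · by_cases hx0 : x = 0
    · rw [hx0, E.l_two_zero_left, map_zero, zero_lie]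
    ext f
    exact sub_eq_zero.mp
      ((hnzd _ _ hx (E.anchor_l_two_sub_lie_apply_smul_eq_zero hx hy hx f)).resolve_right hx0)
end

section
/- Let (B, s, t) be a bi-submersion over a singular foliation F on M. If a vector field X on M admits a lift to B, i.e. a vector field X̃ on B that is both s-projectable onto X and t-projectable onto X, then X is a symmetry of F: [X, F] ⊆ F. -/
/-!
We work algebraically: `OM = C^∞(M)`, `OB = C^∞(B)` are commutative `K`-algebras, the
submersions are given by the pullback algebra maps `s, t : OM →ₐ[K] OB` (with the submersion
property that every vector field on `M` admits a projectable lift), vector fields are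
derivations, `Γ(ker ds) = {ξ : ξ ∘ s* = 0}`, and the pullback foliations `s⁻¹F`, `t⁻¹F` are
characterized by: they contain every vector field projectable onto an element of `F`, and every
projectable vector field in them projects into `F`.  The bi-submersion condition is
`s⁻¹F = t⁻¹F = Γ(ker ds) + Γ(ker dt)`.

Proof idea: lift `Y ∈ F` to an `s`-projectable `η ∈ s⁻¹F`. The bracket `[X̃, η]` is
`s`-projectable onto `[X, Y]`, and it stays in `s⁻¹F = Γ(ker ds) + Γ(ker dt)` because bracketing
with a vector field that is projectable along a submersion preserves the vertical vector fields
of that submersion. Hence `[X, Y] ∈ F`.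
-/

variable {K OM OB : Type*} [CommRing K] [CommRing OM] [CommRing OB]
  [Algebra K OM] [Algebra K OB]

def Projects (s : OM →ₐ[K] OB) (ξ : Derivation K OB OB) (X : Derivation K OM OM) : Prop :=
  ∀ f : OM, ξ (s f) = s (X f)

def kerDiff (s : OM →ₐ[K] OB) : Submodule OB (Derivation K OB OB) where
  carrier := {ξ | ∀ f : OM, ξ (s f) = 0}
  add_mem' := by intro a b ha hb f; simp [ha f, hb f]
  zero_mem' := by intro f; simp
  smul_mem' := by intro c ξ h f; simp [h f]

theorem mem_kerDiff_iff_projects_zero {s : OM →ₐ[K] OB} {ξ : Derivation K OB OB} :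
    ξ ∈ kerDiff s ↔ Projects s ξ 0 := by
  simp only [Projects, Derivation.zero_apply, map_zero]
  rfl

theorem Projects.lie {s : OM →ₐ[K] OB} {ξ η : Derivation K OB OB} {X Y : Derivation K OM OM}
    (hξ : Projects s ξ X) (hη : Projects s η Y) : Projects s ⁅ξ, η⁆ ⁅X, Y⁆ := by
  intro f
  simp only [Derivation.commutator_apply, map_sub, hξ f, hη f, hξ (Y f), hη (X f)]

theorem Projects.lie_mem_kerDiff {s : OM →ₐ[K] OB} {ξ η : Derivation K OB OB}
    {X : Derivation K OM OM} (hξ : Projects s ξ X) (hη : η ∈ kerDiff s) :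
    ⁅ξ, η⁆ ∈ kerDiff s := by
  rw [mem_kerDiff_iff_projects_zero] at hη ⊢
  simpa only [lie_zero] using hξ.lie hη

theorem lie_mem_kerDiff_sup_kerDiff {s t : OM →ₐ[K] OB} {ξ η : Derivation K OB OB}
    {X X' : Derivation K OM OM} (hξs : Projects s ξ X) (hξt : Projects t ξ X')
    (hη : η ∈ kerDiff s ⊔ kerDiff t) : ⁅ξ, η⁆ ∈ kerDiff s ⊔ kerDiff t := by
  obtain ⟨ηs, hηs, ηt, hηt, rfl⟩ := Submodule.mem_sup.mp hη
  rw [lie_add]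
  exact add_mem (Submodule.mem_sup_left (hξs.lie_mem_kerDiff hηs))
    (Submodule.mem_sup_right (hξt.lie_mem_kerDiff hηt))

theorem lift_to_bisubmersion_implies_symmetry_general
    (s t : OM →ₐ[K] OB)
    -- `F` is a singular foliation on `M`:
    (F : Submodule OM (Derivation K OM OM))
    -- `s` and `t` are submersions: projectable lifts exist:
    (hs_sub : ∀ X : Derivation K OM OM, ∃ ξ, Projects s ξ X)
    -- the pullback foliations `s⁻¹F` and `t⁻¹F`:
    (sInvF : Submodule OB (Derivation K OB OB))
    (hs_gen : ∀ X ∈ F, ∀ ξ, Projects s ξ X → ξ ∈ sInvF)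
    (hs_proj : ∀ ξ ∈ sInvF, ∀ X, Projects s ξ X → X ∈ F)
    -- the bi-submersion condition `s⁻¹F = t⁻¹F = Γ(ker ds) + Γ(ker dt)`:
    (hbis : sInvF = kerDiff s ⊔ kerDiff t)
    -- `X̃` is a lift of `X` to the bi-submersion:
    (X : Derivation K OM OM) (Xlift : Derivation K OB OB)
    (hXs : Projects s Xlift X) (hXt : Projects t Xlift X) :
    -- then `X` is a symmetry of `F`:
    ∀ Y ∈ F, ⁅X, Y⁆ ∈ F := by
  intro Y hY
  obtain ⟨η, hη⟩ := hs_sub Y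
  have hη_mem : η ∈ sInvF := hs_gen Y hY η hη
  have hbracket_mem : ⁅Xlift, η⁆ ∈ sInvF := by
    rw [hbis] at hη_mem ⊢
    exact lie_mem_kerDiff_sup_kerDiff hXs hXt hη_mem
  exact hs_proj _ hbracket_mem _ (hXs.lie hη)

/-- see the module docstring. -/
theorem lift_to_bisubmersion_implies_symmetry
    (s t : OM →ₐ[K] OB)
    -- `F` is a singular foliation on `M`:
    (F : Submodule OM (Derivation K OM OM))
    (hF : ∀ X ∈ F, ∀ Y ∈ F, ⁅X, Y⁆ ∈ F)
    -- `s` and `t` are submersions: projectable lifts exist: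
    (hs_sub : ∀ X : Derivation K OM OM, ∃ ξ, Projects s ξ X)
    (ht_sub : ∀ X : Derivation K OM OM, ∃ ξ, Projects t ξ X)
    -- the pullback foliations `s⁻¹F` and `t⁻¹F`:
    (sInvF tInvF : Submodule OB (Derivation K OB OB))
    (hs_gen : ∀ X ∈ F, ∀ ξ, Projects s ξ X → ξ ∈ sInvF)
    (hs_proj : ∀ ξ ∈ sInvF, ∀ X, Projects s ξ X → X ∈ F)
    (ht_gen : ∀ X ∈ F, ∀ ξ, Projects t ξ X → ξ ∈ tInvF)
    (ht_proj : ∀ ξ ∈ tInvF, ∀ X, Projects t ξ X → X ∈ F)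
    -- the bi-submersion condition `s⁻¹F = t⁻¹F = Γ(ker ds) + Γ(ker dt)`:
    (hbis : sInvF = kerDiff s ⊔ kerDiff t)
    (hbit : tInvF = kerDiff s ⊔ kerDiff t)
    -- `X̃` is a lift of `X` to the bi-submersion:
    (X : Derivation K OM OM) (Xlift : Derivation K OB OB)
    (hXs : Projects s Xlift X) (hXt : Projects t Xlift X) :
    -- then `X` is a symmetry of `F`:
    ∀ Y ∈ F, ⁅X, Y⁆ ∈ F :=
  lift_to_bisubmersion_implies_symmetry_general s t F hs_sub sInvF hs_gen hs_proj hbis X Xlift hXs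
    hXt
end

section
/- Let (B, s, t) be a bi-submersion over a singular foliation F on M. Then every internal symmetry X ∈ F admits a lift to B: there exists X̃ ∈ X(B) which is s-projectable onto X and t-projectable onto X. Moreover X̃ can be written X̃ = X⃗ + X⃖ where X⃗ ∈ Γ(ker ds) is t-related to X and X⃖ ∈ Γ(ker dt) is s-related to X. -/
/-!
Smooth functions `OM = C^∞(M)`, `OB = C^∞(B)` are commutative `K`-algebras, the submersions are
their pullback maps `s, t : OM →ₐ[K] OB`, vector fields are derivations, `Projects s ξ X` says that
`ξ` is `s`-projectable onto `X`, and `kerDiff s` is `Γ(ker ds)`.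

Adding a field in `Γ(ker ds)` does not change what a field `s`-projects onto. So an
`s`-projectable lift of `X ∈ F` lies in `s⁻¹F = Γ(ker ds) + Γ(ker dt)`, and its `Γ(ker dt)`
component `X⃖` is still `s`-related to `X`; symmetrically a `t`-projectable lift yields
`X⃗ ∈ Γ(ker ds)` `t`-related to `X`. Then `X⃗ + X⃖` projects onto `X` under both `s` and `t`.
-/

variable {K OM OB : Type*} [CommRing K] [CommRing OM] [CommRing OB]
  [Algebra K OM] [Algebra K OB]

section

variable {s t : OM →ₐ[K] OB} {ξ η : Derivation K OB OB} {X : Derivation K OM OM}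

theorem projects_add_left_iff (hη : η ∈ kerDiff s) : Projects s (η + ξ) X ↔ Projects s ξ X := by
  simp only [Projects, Derivation.add_apply, hη _, zero_add]

theorem projects_add_right_iff (hη : η ∈ kerDiff s) : Projects s (ξ + η) X ↔ Projects s ξ X := by
  rw [add_comm, projects_add_left_iff hη]

theorem exists_mem_kerDiff_projects_of_mem_sup (h : ξ ∈ kerDiff s ⊔ kerDiff t)
    (hξ : Projects s ξ X) : ∃ η ∈ kerDiff t, Projects s η X := by
  obtain ⟨a, ha, b, hb, rfl⟩ := Submodule.mem_sup.mp h
  exact ⟨b, hb, (projects_add_left_iff ha).mp hξ⟩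

end

theorem internal_symmetry_lifts_to_bisubmersion_general
    (s t : OM →ₐ[K] OB)
    -- `F` is a singular foliation on `M`:
    (F : Submodule OM (Derivation K OM OM))
    -- `s` and `t` are submersions: projectable lifts exist:
    (hs_sub : ∀ X : Derivation K OM OM, ∃ ξ, Projects s ξ X)
    (ht_sub : ∀ X : Derivation K OM OM, ∃ ξ, Projects t ξ X)
    -- the pullback foliations `s⁻¹F` and `t⁻¹F`:
    (sInvF tInvF : Submodule OB (Derivation K OB OB))
    (hs_gen : ∀ X ∈ F, ∀ ξ, Projects s ξ X → ξ ∈ sInvF)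
    (ht_gen : ∀ X ∈ F, ∀ ξ, Projects t ξ X → ξ ∈ tInvF)
    -- the bi-submersion condition `s⁻¹F = t⁻¹F = Γ(ker ds) + Γ(ker dt)`:
    (hbis : sInvF = kerDiff s ⊔ kerDiff t)
    (hbit : tInvF = kerDiff s ⊔ kerDiff t) :
    ∀ X ∈ F, ∃ Xr Xl : Derivation K OB OB,
      Xr ∈ kerDiff s ∧ Xl ∈ kerDiff t ∧
      Projects t Xr X ∧ Projects s Xl X ∧
      Projects s (Xr + Xl) X ∧ Projects t (Xr + Xl) X := by
  intro X hX
  obtain ⟨ξs, hξs⟩ := hs_sub X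
  obtain ⟨ξt, hξt⟩ := ht_sub X
  obtain ⟨Xl, hXl, hXl_s⟩ :=
    exists_mem_kerDiff_projects_of_mem_sup (hbis ▸ hs_gen X hX ξs hξs) hξs
  obtain ⟨Xr, hXr, hXr_t⟩ := exists_mem_kerDiff_projects_of_mem_sup
    (sup_comm (kerDiff s) _ ▸ hbit ▸ ht_gen X hX ξt hξt) hξt
  exact ⟨Xr, Xl, hXr, hXl, hXr_t, hXl_s, (projects_add_left_iff hXr).mpr hXl_s,
    (projects_add_right_iff hXl).mpr hXr_t⟩

/-- see the module docstring: every internal symmetry `X ∈ F` admits a lift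
`X̃ = X⃗ + X⃖` to the bi-submersion, with `X⃗ ∈ Γ(ker ds)` `t`-related to `X` and
`X⃖ ∈ Γ(ker dt)` `s`-related to `X`; in particular `X̃` is both `s`- and `t`-projectable
onto `X`. -/
theorem internal_symmetry_lifts_to_bisubmersion
    (s t : OM →ₐ[K] OB)
    -- `F` is a singular foliation on `M`:
    (F : Submodule OM (Derivation K OM OM))
    (hF : ∀ X ∈ F, ∀ Y ∈ F, ⁅X, Y⁆ ∈ F)
    -- `s` and `t` are submersions: projectable lifts exist:
    (hs_sub : ∀ X : Derivation K OM OM, ∃ ξ, Projects s ξ X)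
    (ht_sub : ∀ X : Derivation K OM OM, ∃ ξ, Projects t ξ X)
    -- the pullback foliations `s⁻¹F` and `t⁻¹F`:
    (sInvF tInvF : Submodule OB (Derivation K OB OB))
    (hs_gen : ∀ X ∈ F, ∀ ξ, Projects s ξ X → ξ ∈ sInvF)
    (hs_proj : ∀ ξ ∈ sInvF, ∀ X, Projects s ξ X → X ∈ F)
    (ht_gen : ∀ X ∈ F, ∀ ξ, Projects t ξ X → ξ ∈ tInvF)
    (ht_proj : ∀ ξ ∈ tInvF, ∀ X, Projects t ξ X → X ∈ F)
    -- the bi-submersion condition `s⁻¹F = t⁻¹F = Γ(ker ds) + Γ(ker dt)`: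
    (hbis : sInvF = kerDiff s ⊔ kerDiff t)
    (hbit : tInvF = kerDiff s ⊔ kerDiff t) :
    ∀ X ∈ F, ∃ Xr Xl : Derivation K OB OB,
      Xr ∈ kerDiff s ∧ Xl ∈ kerDiff t ∧
      Projects t Xr X ∧ Projects s Xl X ∧
      Projects s (Xr + Xl) X ∧ Projects t (Xr + Xl) X :=
  internal_symmetry_lifts_to_bisubmersion_general s t F hs_sub ht_sub sInvF tInvF hs_gen ht_gen hbis
    hbit
end
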